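/- arXiv:2006.06953 — 2 statements merged into one kernel-verified Lean document; each statement's English description precedes it below -/
import Mathlib

section
/- Inclusion logic is closed under unions: for every formula φ of FO(⊆) (first-order team logic extended by inclusion atoms), every structure A, and all teams X, Y, if A ⊨_X φ and A ⊨_Y φ, then A ⊨_{X∪Y} φ. -/
/- Inclusion logic FO(⊆) is closed under unions. -/

namespace Stmt2

/-- Formulas of FO(⊆): first-order team logic (atomic negation only)
extended by inclusion atoms. -/
inductive TF (σ : Type) (ar : σ → ℕ) (V : Type) : Type where
  | eq (x y : V)
  | neq (x y : V)
  | rel (R : σ) (xs : Fin (ar R) → V)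
  | nrel (R : σ) (xs : Fin (ar R) → V)
  | and (φ ψ : TF σ ar V)
  | or (φ ψ : TF σ ar V)
  | ex (x : V) (φ : TF σ ar V)
  | all (x : V) (φ : TF σ ar V)
  | incl (n : ℕ) (xs ys : Fin n → V)

/-- A `σ`-structure with universe `A`. -/
structure Struc (σ : Type) (ar : σ → ℕ) (A : Type) where
  rel : ∀ R : σ, (Fin (ar R) → A) → Prop

variable {σ V A : Type} {ar : σ → ℕ}

/-- Lax team semantics `𝔄 ⊨_X φ`. -/
def TeamSat [DecidableEq V] (𝔄 : Struc σ ar A) : TF σ ar V → Set (V → A) → Prop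
  | .eq x y, X => ∀ s ∈ X, s x = s y
  | .neq x y, X => ∀ s ∈ X, s x ≠ s y
  | .rel R xs, X => ∀ s ∈ X, 𝔄.rel R (fun i => s (xs i))
  | .nrel R xs, X => ∀ s ∈ X, ¬ 𝔄.rel R (fun i => s (xs i))
  | .and φ ψ, X => TeamSat 𝔄 φ X ∧ TeamSat 𝔄 ψ X
  | .or φ ψ, X => ∃ Y Z : Set (V → A), Y ∪ Z = X ∧ TeamSat 𝔄 φ Y ∧ TeamSat 𝔄 ψ Z
  | .ex x φ, X => ∃ F : (V → A) → Set A, (∀ s ∈ X, (F s).Nonempty) ∧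
      TeamSat 𝔄 φ {t | ∃ s ∈ X, ∃ a ∈ F s, t = Function.update s x a}
  | .all x φ, X => TeamSat 𝔄 φ {t | ∃ s ∈ X, ∃ a : A, t = Function.update s x a}
  | .incl _ xs ys, X => ∀ s ∈ X, ∃ t ∈ X, ∀ i, s (xs i) = t (ys i)

/-- FO(⊆) is closed under unions: if `𝔄 ⊨_X φ` and `𝔄 ⊨_Y φ`
then `𝔄 ⊨_{X ∪ Y} φ`. -/
theorem incl_union_closed [DecidableEq V] (φ : TF σ ar V) (𝔄 : Struc σ ar A)
    (X Y : Set (V → A)) (hX : TeamSat 𝔄 φ X) (hY : TeamSat 𝔄 φ Y) :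
    TeamSat 𝔄 φ (X ∪ Y) := by
  classical
  induction φ generalizing X Y with
  | eq x y =>
    intro s hs; rcases hs with h | h
    · exact hX s h
    · exact hY s h
  | neq x y =>
    intro s hs; rcases hs with h | h
    · exact hX s h
    · exact hY s h
  | rel R xs =>
    intro s hs; rcases hs with h | h
    · exact hX s h
    · exact hY s h
  | nrel R xs =>
    intro s hs; rcases hs with h | h
    · exact hX s h
    · exact hY s h
  | and φ ψ ihφ ihψ =>
    exact ⟨ihφ X Y hX.1 hY.1, ihψ X Y hX.2 hY.2⟩
  | or φ ψ ihφ ihψ =>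
    obtain ⟨Y₁, Z₁, h1, hφ1, hψ1⟩ := hX
    obtain ⟨Y₂, Z₂, h2, hφ2, hψ2⟩ := hY
    refine ⟨Y₁ ∪ Y₂, Z₁ ∪ Z₂, ?_, ihφ _ _ hφ1 hφ2, ihψ _ _ hψ1 hψ2⟩
    rw [← h1, ← h2]; ext t; simp [Set.mem_union]; tauto
  | ex x φ ih =>
    obtain ⟨F₁, hne1, h1⟩ := hX
    obtain ⟨F₂, hne2, h2⟩ := hY
    refine ⟨fun s => (if s ∈ X then F₁ s else ∅) ∪ (if s ∈ Y then F₂ s else ∅),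
      ?_, ?_⟩
    · intro s hs
      rcases hs with h | h
      · obtain ⟨a, ha⟩ := hne1 s h
        exact ⟨a, Or.inl (by simp [h, ha])⟩
      · obtain ⟨a, ha⟩ := hne2 s h
        exact ⟨a, Or.inr (by simp [h, ha])⟩
    · have := ih _ _ h1 h2
      convert this using 1
      ext t
      constructor
      · rintro ⟨s, hs, a, ha, rfl⟩
        rcases ha with ha | ha
        · by_cases hsX : s ∈ X
          · exact Or.inl ⟨s, hsX, a, by simpa [hsX] using ha, rfl⟩
          · simp [hsX] at ha
        · by_cases hsY : s ∈ Y
          · exact Or.inr ⟨s, hsY, a, by simpa [hsY] using ha, rfl⟩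
          · simp [hsY] at ha
      · rintro (⟨s, hs, a, ha, rfl⟩ | ⟨s, hs, a, ha, rfl⟩)
        · exact ⟨s, Or.inl hs, a, Or.inl (by simp [hs, ha]), rfl⟩
        · exact ⟨s, Or.inr hs, a, Or.inr (by simp [hs, ha]), rfl⟩
  | all x φ ih =>
    have := ih _ _ hX hY
    have hset : ({t | ∃ s ∈ X ∪ Y, ∃ a : A, t = Function.update s x a} : Set (V → A)) =
        {t | ∃ s ∈ X, ∃ a : A, t = Function.update s x a} ∪
        {t | ∃ s ∈ Y, ∃ a : A, t = Function.update s x a} := ?_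
    · show TeamSat 𝔄 φ _
      rw [hset]; exact this
    ext t
    constructor
    · rintro ⟨s, hs | hs, a, rfl⟩
      · exact Or.inl ⟨s, hs, a, rfl⟩
      · exact Or.inr ⟨s, hs, a, rfl⟩
    · rintro (⟨s, hs, a, rfl⟩ | ⟨s, hs, a, rfl⟩)
      · exact ⟨s, Or.inl hs, a, rfl⟩
      · exact ⟨s, Or.inr hs, a, rfl⟩
  | incl n xs ys =>
    intro s hs
    rcases hs with h | h
    · obtain ⟨t, ht, h'⟩ := hX s h
      exact ⟨t, Or.inl ht, h'⟩
    · obtain ⟨t, ht, h'⟩ := hY s h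
      exact ⟨t, Or.inr ht, h'⟩

end Stmt2
end

section
/- Myopic formulas are expressible in inclusion logic: let φ(R) = ∀x̄ (R(x̄) → ψ(R,x̄)) be a myopic σ-formula, i.e. ψ is a first-order σ∪{R}-formula in which the relation symbol R occurs only positively. Then there exists a σ-formula χ of FO(⊆) with free variables x̄ such that for every σ-structure A and every team X with domain x̄, A ⊨_X χ (lax team semantics) if and only if (A, rel(X)) ⊨ φ(R) in classical semantics, where rel(X) = {s(x̄) : s ∈ X} is the relation induced by the team X. -/
/- Myopic first-order formulas φ(R) = ∀x̄ (R(x̄) → ψ(R,x̄)), with R occurring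
only positively in ψ, are expressible in inclusion logic FO(⊆): there is an
FO(⊆) formula χ with free variables x̄ such that for all structures 𝔄 and all
teams X with domain x̄ we have 𝔄 ⊨_X χ  iff  (𝔄, rel(X)) ⊨ φ(R).
Variables are natural numbers; assignments are partial maps `ℕ → Option A`
(so a team with domain x̄ consists of assignments defined exactly on x̄). -/

namespace Stmt15

/-- A `σ`-structure with universe `A`. -/
structure Struc (σ : Type) (ar : σ → ℕ) (A : Type) where
  rel : ∀ R : σ, (Fin (ar R) → A) → Prop

/-- Supplementing an assignment: `s(a/x)`. -/
def upd {A : Type} (s : ℕ → Option A) (x : ℕ) (a : A) : ℕ → Option A :=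
  Function.update s x (some a)

/-- Formulas of FO(⊆): first-order team logic (atomic negation only)
extended by inclusion atoms. -/
inductive TF (σ : Type) (ar : σ → ℕ) : Type where
  | eq (x y : ℕ)
  | neq (x y : ℕ)
  | rel (R : σ) (xs : Fin (ar R) → ℕ)
  | nrel (R : σ) (xs : Fin (ar R) → ℕ)
  | and (φ ψ : TF σ ar)
  | or (φ ψ : TF σ ar)
  | ex (x : ℕ) (φ : TF σ ar)
  | all (x : ℕ) (φ : TF σ ar)
  | incl (n : ℕ) (xs ys : Fin n → ℕ)

variable {σ A : Type} {ar : σ → ℕ}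

/-- Free variables of an FO(⊆) formula. -/
def tfree : TF σ ar → Finset ℕ
  | .eq x y => {x, y}
  | .neq x y => {x, y}
  | .rel _ xs => Finset.image xs Finset.univ
  | .nrel _ xs => Finset.image xs Finset.univ
  | .and φ ψ => tfree φ ∪ tfree ψ
  | .or φ ψ => tfree φ ∪ tfree ψ
  | .ex x φ => tfree φ \ {x}
  | .all x φ => tfree φ \ {x}
  | .incl _ xs ys => Finset.image xs Finset.univ ∪ Finset.image ys Finset.univ

/-- Lax team semantics `𝔄 ⊨_X φ` for teams of partial assignments. -/
def TeamSat (𝔄 : Struc σ ar A) : TF σ ar → Set (ℕ → Option A) → Prop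
  | .eq x y, X => ∀ s ∈ X, s x = s y
  | .neq x y, X => ∀ s ∈ X, s x ≠ s y
  | .rel R xs, X => ∀ s ∈ X, ∃ t : Fin (ar R) → A,
      (∀ i, s (xs i) = some (t i)) ∧ 𝔄.rel R t
  | .nrel R xs, X => ∀ s ∈ X, ∀ t : Fin (ar R) → A,
      (∀ i, s (xs i) = some (t i)) → ¬ 𝔄.rel R t
  | .and φ ψ, X => TeamSat 𝔄 φ X ∧ TeamSat 𝔄 ψ X
  | .or φ ψ, X => ∃ Y Z : Set (ℕ → Option A), Y ∪ Z = X ∧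
      TeamSat 𝔄 φ Y ∧ TeamSat 𝔄 ψ Z
  | .ex x φ, X => ∃ F : (ℕ → Option A) → Set A, (∀ s ∈ X, (F s).Nonempty) ∧
      TeamSat 𝔄 φ {t | ∃ s ∈ X, ∃ a ∈ F s, t = upd s x a}
  | .all x φ, X => TeamSat 𝔄 φ {t | ∃ s ∈ X, ∃ a : A, t = upd s x a}
  | .incl _ xs ys, X => ∀ s ∈ X, ∃ t ∈ X, ∀ i, s (xs i) = t (ys i)

/-- Classical first-order formulas (full negation) over vocabulary `σ'`. -/
inductive CF (σ' : Type) (ar' : σ' → ℕ) : Type where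
  | eq (x y : ℕ)
  | rel (R : σ') (xs : Fin (ar' R) → ℕ)
  | not (φ : CF σ' ar')
  | and (φ ψ : CF σ' ar')
  | or (φ ψ : CF σ' ar')
  | ex (x : ℕ) (φ : CF σ' ar')
  | all (x : ℕ) (φ : CF σ' ar')

/-- Free variables of a classical first-order formula. -/
def cfree {σ' : Type} {ar' : σ' → ℕ} : CF σ' ar' → Finset ℕ
  | .eq x y => {x, y}
  | .rel _ xs => Finset.image xs Finset.univ
  | .not φ => cfree φ
  | .and φ ψ => cfree φ ∪ cfree ψ
  | .or φ ψ => cfree φ ∪ cfree ψ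
  | .ex x φ => cfree φ \ {x}
  | .all x φ => cfree φ \ {x}

/-- Classical Tarski semantics. -/
def CSat {σ' : Type} {ar' : σ' → ℕ} (𝔅 : Struc σ' ar' A) :
    CF σ' ar' → (ℕ → Option A) → Prop
  | .eq x y, s => s x = s y
  | .rel R xs, s => ∃ t : Fin (ar' R) → A,
      (∀ i, s (xs i) = some (t i)) ∧ 𝔅.rel R t
  | .not φ, s => ¬ CSat 𝔅 φ s
  | .and φ ψ, s => CSat 𝔅 φ s ∧ CSat 𝔅 ψ s
  | .or φ ψ, s => CSat 𝔅 φ s ∨ CSat 𝔅 ψ s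
  | .ex x φ, s => ∃ a : A, CSat 𝔅 φ (upd s x a)
  | .all x φ, s => ∀ a : A, CSat 𝔅 φ (upd s x a)

/-- `polOK isTarget p φ` holds iff within `φ`, read at ambient polarity `p`
(`true` = positive), no relation symbol satisfying `isTarget` has a negative
occurrence (an occurrence under an odd number of negations). -/
def polOK {σ' : Type} {ar' : σ' → ℕ} (isTarget : σ' → Prop) :
    Bool → CF σ' ar' → Prop
  | _, .eq _ _ => True
  | p, .rel R _ => p = false → ¬ isTarget R
  | p, .not φ => polOK isTarget (!p) φ
  | p, .and φ ψ => polOK isTarget p φ ∧ polOK isTarget p ψ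
  | p, .or φ ψ => polOK isTarget p φ ∧ polOK isTarget p ψ
  | p, .ex _ φ => polOK isTarget p φ
  | p, .all _ φ => polOK isTarget p φ

/-- Universal quantification over a list of variables. -/
def foralls {σ' : Type} {ar' : σ' → ℕ} (l : List ℕ) (φ : CF σ' ar') :
    CF σ' ar' :=
  l.foldr (fun x χ => CF.all x χ) φ

/-- The myopic formula `φ(R) = ∀x̄ (R(x̄) → ψ(R,x̄))`, with `R → ψ` written as
`¬R(x̄) ∨ ψ`. The extra relation symbol `R` is `Sum.inr ()` of arity `n`. -/
def myopic {σ : Type} {ar : σ → ℕ} (n : ℕ) (xs : Fin n → ℕ)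
    (ψ : CF (σ ⊕ Unit) (Sum.elim ar fun _ => n)) :
    CF (σ ⊕ Unit) (Sum.elim ar fun _ => n) :=
  foralls (List.ofFn xs)
    (CF.or (CF.not (CF.rel (Sum.inr ()) xs)) ψ)

/-- The expansion `(𝔄, R)` of a `σ`-structure `𝔄` by an interpretation for
the extra `n`-ary relation symbol `R = Sum.inr ()`. -/
def extStruc (𝔄 : Struc σ ar A) (n : ℕ) (Rint : (Fin n → A) → Prop) :
    Struc (σ ⊕ Unit) (Sum.elim ar fun _ => n) A where
  rel R := match R with
    | .inl S => 𝔄.rel S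
    | .inr _ => Rint

/-- The relation `rel(X) = { s(x̄) : s ∈ X }` induced by a team `X`. -/
def relOf {A : Type} (n : ℕ) (xs : Fin n → ℕ) (X : Set (ℕ → Option A)) :
    (Fin n → A) → Prop :=
  fun t => ∃ s ∈ X, ∀ i, s (xs i) = some (t i)

/-! ### Basic helpers -/

lemma teamSat_congr (𝔄 : Struc σ ar A) (φ : TF σ ar) {X Y : Set (ℕ → Option A)}
    (h : X = Y) : TeamSat 𝔄 φ X ↔ TeamSat 𝔄 φ Y := by subst h; rfl

lemma teamSat_empty (𝔄 : Struc σ ar A) (φ : TF σ ar) : TeamSat 𝔄 φ (∅ : Set (ℕ → Option A)) := by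
  induction φ with
  | eq x y => intro s hs; cases hs
  | neq x y => intro s hs; cases hs
  | rel R xs => intro s hs; cases hs
  | nrel R xs => intro s hs; cases hs
  | and φ ψ ihφ ihψ => exact ⟨ihφ, ihψ⟩
  | or φ ψ ihφ ihψ => exact ⟨∅, ∅, by simp, ihφ, ihψ⟩
  | ex x φ ih =>
      refine ⟨fun _ => ∅, by simp, ?_⟩
      have : {t : ℕ → Option A | ∃ s ∈ (∅ : Set (ℕ → Option A)), ∃ a ∈ (∅ : Set A), t = upd s x a} = ∅ := by
        ext t; simp
      rw [teamSat_congr _ _ this]; exact ih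
  | all x φ ih =>
      have : {t : ℕ → Option A | ∃ s ∈ (∅ : Set (ℕ → Option A)), ∃ a : A, t = upd s x a} = ∅ := by
        ext t; simp
      show TeamSat 𝔄 φ _
      rw [teamSat_congr _ _ this]; exact ih
  | incl n xs ys => intro s hs; cases hs

lemma cSat_congr {σ' : Type} {ar' : σ' → ℕ} (𝔅 : Struc σ' ar' A) (θ : CF σ' ar') :
    ∀ {s t : ℕ → Option A}, (∀ v ∈ cfree θ, s v = t v) → (CSat 𝔅 θ s ↔ CSat 𝔅 θ t) := by
  induction θ with
  | eq x y =>
      intro s t h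
      simp only [CSat]
      rw [h x (by simp [cfree]), h y (by simp [cfree])]
  | rel R xs =>
      intro s t h
      simp only [CSat]
      constructor
      · rintro ⟨w, hw, hr⟩
        exact ⟨w, fun i => by rw [← h (xs i) (by simp [cfree])]; exact hw i, hr⟩
      · rintro ⟨w, hw, hr⟩
        exact ⟨w, fun i => by rw [h (xs i) (by simp [cfree])]; exact hw i, hr⟩
  | not θ ih => intro s t h; simp only [CSat]; rw [ih h]
  | and θ₁ θ₂ ih₁ ih₂ =>
      intro s t h
      simp only [CSat]
      rw [ih₁ (fun v hv => h v (by simp [cfree]; exact Or.inl hv)),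
        ih₂ (fun v hv => h v (by simp [cfree]; exact Or.inr hv))]
  | or θ₁ θ₂ ih₁ ih₂ =>
      intro s t h
      simp only [CSat]
      rw [ih₁ (fun v hv => h v (by simp [cfree]; exact Or.inl hv)),
        ih₂ (fun v hv => h v (by simp [cfree]; exact Or.inr hv))]
  | ex x θ ih =>
      intro s t h
      simp only [CSat]
      constructor <;> (rintro ⟨a, ha⟩; refine ⟨a, ?_⟩)
      · rw [← ih (fun v hv => ?_)]; exact ha
        by_cases hvx : v = x
        · subst hvx; simp [upd]
        · simp [upd, Function.update_of_ne hvx]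
          exact h v (by simp [cfree, hvx]; exact hv)
      · rw [ih (fun v hv => ?_)]; exact ha
        by_cases hvx : v = x
        · subst hvx; simp [upd]
        · simp [upd, Function.update_of_ne hvx]
          exact h v (by simp [cfree, hvx]; exact hv)
  | all x θ ih =>
      intro s t h
      simp only [CSat]
      constructor <;> (intro ha a; specialize ha a)
      · rw [← ih (fun v hv => ?_)]; exact ha
        by_cases hvx : v = x
        · subst hvx; simp [upd]
        · simp [upd, Function.update_of_ne hvx]
          exact h v (by simp [cfree, hvx]; exact hv)
      · rw [ih (fun v hv => ?_)]; exact ha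
        by_cases hvx : v = x
        · subst hvx; simp [upd]
        · simp [upd, Function.update_of_ne hvx]
          exact h v (by simp [cfree, hvx]; exact hv)

/-! ### Tuple updates and blocks of existential quantifiers -/

/-- Update an assignment on the block of variables `[c, c+k)` with the tuple `w`. -/
def updT {A : Type} (c k : ℕ) (s : ℕ → Option A) (w : Fin k → A) : ℕ → Option A :=
  fun v => if h : c ≤ v ∧ v < c + k then some (w ⟨v - c, by omega⟩) else s v

lemma updT_lt {c k : ℕ} {s : ℕ → Option A} {w : Fin k → A} {v : ℕ} (h : v < c) :
    updT c k s w v = s v := by simp only [updT]; rw [dif_neg]; omega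

lemma updT_ge {c k : ℕ} {s : ℕ → Option A} {w : Fin k → A} {v : ℕ} (h : c + k ≤ v) :
    updT c k s w v = s v := by simp only [updT]; rw [dif_neg]; omega

lemma updT_at {c k : ℕ} {s : ℕ → Option A} {w : Fin k → A} (j : Fin k) :
    updT c k s w (c + j) = some (w j) := by
  rw [show updT c k s w (c + j) = some (w ⟨c + j - c, by omega⟩) from dif_pos (by omega)]
  exact congrArg some (congrArg w (Fin.ext (by simp)))

lemma updT_zero {c : ℕ} {s : ℕ → Option A} {w : Fin 0 → A} : updT c 0 s w = s := by
  funext v; simp only [updT]; rw [dif_neg]; omega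

lemma updT_succ {c k : ℕ} {s : ℕ → Option A} {w : Fin (k + 1) → A} :
    updT c (k + 1) s w = updT (c + 1) k (upd s c (w 0)) (fun j => w j.succ) := by
  funext v
  rcases lt_trichotomy v c with h | h | h
  · rw [updT_lt h, updT_lt (by omega)]
    simp [upd, Function.update_of_ne (by omega : v ≠ c)]
  · subst h
    rw [show updT v (k + 1) s w v = some (w ⟨v - v, by omega⟩) from dif_pos (by omega)]
    rw [updT_lt (by omega)]
    simp only [upd, Function.update_self]
    exact congrArg some (congrArg w (Fin.ext (by simp)))
  · rcases Nat.lt_or_ge v (c + 1 + k) with h2 | h2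
    · have hv : c + 1 ≤ v := by omega
      rw [show (updT c (k+1) s w v) = some (w ⟨v - c, by omega⟩) from dif_pos (by omega)]
      rw [show (updT (c+1) k (upd s c (w 0)) (fun j => w j.succ) v) =
          some (w (Fin.succ ⟨v - (c+1), by omega⟩)) from dif_pos (by omega)]
      exact congrArg some (congrArg w (Fin.ext (by simp [Fin.val_succ]; omega)))
    · rw [updT_ge (by omega), updT_ge (by omega)]
      simp [upd, Function.update_of_ne (by omega : v ≠ c)]

/-- `exsRange k c φ = ∃v_c ∃v_{c+1} … ∃v_{c+k-1} φ`. -/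
def exsRange (k c : ℕ) (φ : TF σ ar) : TF σ ar :=
  match k with
  | 0 => φ
  | k + 1 => .ex c (exsRange k (c + 1) φ)

lemma teamSat_exsRange_intro (𝔄 : Struc σ ar A) :
    ∀ (k c : ℕ) (φ : TF σ ar) (Y : Set (ℕ → Option A))
      (G : (ℕ → Option A) → Set (Fin k → A)),
      (∀ s ∈ Y, (G s).Nonempty) →
      TeamSat 𝔄 φ {t | ∃ s ∈ Y, ∃ w ∈ G s, t = updT c k s w} →
      TeamSat 𝔄 (exsRange k c φ) Y := by
  intro k
  induction k with
  | zero =>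
      intro c φ Y G hne h
      show TeamSat 𝔄 φ Y
      rw [teamSat_congr 𝔄 φ (show Y = {t | ∃ s ∈ Y, ∃ w ∈ G s, t = updT c 0 s w} from ?_)]
      · exact h
      · ext t
        simp only [Set.mem_setOf_eq]
        constructor
        · intro ht
          obtain ⟨w, hw⟩ := hne t ht
          exact ⟨t, ht, w, hw, updT_zero.symm⟩
        · rintro ⟨s, hs, w, _, rfl⟩
          rw [updT_zero]; exact hs
  | succ k ih =>
      intro c φ Y G hne h
      show TeamSat 𝔄 (.ex c (exsRange k (c+1) φ)) Y
      refine ⟨fun s => {a | ∃ w ∈ G s, w 0 = a}, ?_, ?_⟩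
      · intro s hs
        obtain ⟨w, hw⟩ := hne s hs
        exact ⟨w 0, w, hw, rfl⟩
      · apply ih (c+1) φ _ (fun t => {v | ∃ s ∈ Y, ∃ w ∈ G s, t = upd s c (w 0) ∧ v = fun j => w j.succ})
        · rintro t ⟨s, hs, a, ⟨w, hwG, rfl⟩, rfl⟩
          exact ⟨fun j => w j.succ, s, hs, w, hwG, rfl, rfl⟩
        · rw [teamSat_congr 𝔄 φ (show _ = {t | ∃ s ∈ Y, ∃ w ∈ G s, t = updT c (k+1) s w} from ?_)]
          · exact h
          · ext t
            simp only [Set.mem_setOf_eq]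
            constructor
            · rintro ⟨t₁, ⟨s, hs, w, hwG, rfl, rfl⟩, v, ⟨s', hs', w', hw'G, heq, rfl⟩, rfl⟩
              refine ⟨s', hs', w', hw'G, ?_⟩
              rw [updT_succ, ← heq]
            · rintro ⟨s, hs, w, hwG, rfl⟩
              refine ⟨upd s c (w 0), ⟨s, hs, w 0, ⟨w, hwG, rfl⟩, rfl⟩,
                fun j => w j.succ, ⟨s, hs, w, hwG, rfl, rfl⟩, ?_⟩
              rw [updT_succ]

lemma teamSat_exsRange_elim (𝔄 : Struc σ ar A) :
    ∀ (k c : ℕ) (φ : TF σ ar) (Y : Set (ℕ → Option A)),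
      TeamSat 𝔄 (exsRange k c φ) Y →
      ∃ Y' : Set (ℕ → Option A), TeamSat 𝔄 φ Y' ∧
        (∀ t ∈ Y', ∃ s ∈ Y, ∀ v, v < c → t v = s v) ∧
        (∀ s ∈ Y, ∃ t ∈ Y', ∀ v, v < c → t v = s v) := by
  intro k
  induction k with
  | zero =>
      intro c φ Y h
      exact ⟨Y, h, fun t ht => ⟨t, ht, fun v _ => rfl⟩, fun s hs => ⟨s, hs, fun v _ => rfl⟩⟩
  | succ k ih =>
      intro c φ Y h
      obtain ⟨F, hF, h1⟩ := h
      obtain ⟨Y', hY', ha, hb⟩ := ih (c+1) φ _ h1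
      refine ⟨Y', hY', ?_, ?_⟩
      · intro t ht
        obtain ⟨t₁, ⟨s, hs, a, _, rfl⟩, hagr⟩ := ha t ht
        refine ⟨s, hs, fun v hv => ?_⟩
        rw [hagr v (by omega)]
        simp [upd, Function.update_of_ne (by omega : v ≠ c)]
      · intro s hs
        obtain ⟨a, haF⟩ := hF s hs
        obtain ⟨t, ht, hagr⟩ := hb (upd s c a) ⟨s, hs, a, haF, rfl⟩
        refine ⟨t, ht, fun v hv => ?_⟩
        rw [hagr v (by omega)]
        simp [upd, Function.update_of_ne (by omega : v ≠ c)]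

/-! ### Signed classical satisfaction and the translation -/

/-- Signed classical satisfaction: positive = `CSat`, negative = `¬ CSat`. -/
def CS {σ' : Type} {ar' : σ' → ℕ} (𝔅 : Struc σ' ar' A) (p : Bool) (θ : CF σ' ar')
    (s : ℕ → Option A) : Prop :=
  match p with
  | true => CSat 𝔅 θ s
  | false => ¬ CSat 𝔅 θ s

lemma cs_congr {σ' : Type} {ar' : σ' → ℕ} (𝔅 : Struc σ' ar' A) (p : Bool) (θ : CF σ' ar')
    {s t : ℕ → Option A} (h : ∀ v ∈ cfree θ, s v = t v) : CS 𝔅 p θ s ↔ CS 𝔅 p θ t := by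
  cases p <;> simp [CS, cSat_congr 𝔅 θ h]

/-- The vocabulary `σ ∪ {R}`. -/
abbrev sigR (σ : Type) : Type := σ ⊕ Unit

abbrev arR (ar : σ → ℕ) (n : ℕ) : sigR σ → ℕ := Sum.elim ar fun _ => n

/-- First half of a `2n`-tuple. -/
def half1 {n : ℕ} (g : Fin (2 * n) → A) : Fin n → A := fun j => g ⟨j, by omega⟩

/-- Second half of a `2n`-tuple. -/
def half2 {n : ℕ} (g : Fin (2 * n) → A) : Fin n → A := fun j => g ⟨n + j, by omega⟩

/-- Pairing of two `n`-tuples into a `2n`-tuple. -/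
def pairT {n : ℕ} (w₁ w₂ : Fin n → A) : Fin (2 * n) → A :=
  fun i => if h : (i : ℕ) < n then w₁ ⟨i, h⟩ else w₂ ⟨(i : ℕ) - n, by omega⟩

lemma half1_pairT {n : ℕ} (w₁ w₂ : Fin n → A) : half1 (pairT w₁ w₂) = w₁ := by
  funext j
  simp only [half1, pairT]
  rw [dif_pos (by omega)]

lemma half2_pairT {n : ℕ} (w₁ w₂ : Fin n → A) : half2 (pairT w₁ w₂) = w₂ := by
  funext j
  simp only [half2, pairT]
  rw [dif_neg (by omega)]
  exact congrArg w₂ (Fin.ext (by simp))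

/-- The disjunction construct: refresh the reference variables on both sides. -/
def orc (n c : ℕ) (z : Fin n → ℕ) (T₁ T₂ : TF σ ar) : TF σ ar :=
  exsRange (2 * n) c
    (.and (.incl n (fun j => c + j) z)
      (.and (.incl n (fun j => c + n + j) z) (.or T₁ T₂)))

/-- The translation of signed classical formulas into FO(⊆).
`ρ` maps classical variables to team variables, `c` is a fresh-variable
counter, and `z` is the current tuple of reference variables for `R`. -/
def tr (n : ℕ) : Bool → CF (sigR σ) (arR ar n) → (ℕ → ℕ) → ℕ → (Fin n → ℕ) → TF σ ar
  | true, .eq x y, ρ, _, _ => .eq (ρ x) (ρ y)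
  | false, .eq x y, ρ, _, _ => .neq (ρ x) (ρ y)
  | true, .rel (.inl S) ts, ρ, _, _ => .rel S (fun i => ρ (ts i))
  | false, .rel (.inl S) ts, ρ, _, _ => .nrel S (fun i => ρ (ts i))
  | true, .rel (.inr _) ts, ρ, _, z => .incl n (fun i => ρ (ts i)) z
  | false, .rel (.inr _) _, _, _, _ => .eq 0 0
  | p, .not θ, ρ, c, z => tr n (!p) θ ρ c z
  | true, .and θ₁ θ₂, ρ, c, z => .and (tr n true θ₁ ρ c z) (tr n true θ₂ ρ c z)
  | false, .and θ₁ θ₂, ρ, c, z =>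
      orc n c z (tr n false θ₁ ρ (c + 2 * n) (fun j => c + j))
        (tr n false θ₂ ρ (c + 2 * n) (fun j => c + n + j))
  | true, .or θ₁ θ₂, ρ, c, z =>
      orc n c z (tr n true θ₁ ρ (c + 2 * n) (fun j => c + j))
        (tr n true θ₂ ρ (c + 2 * n) (fun j => c + n + j))
  | false, .or θ₁ θ₂, ρ, c, z => .and (tr n false θ₁ ρ c z) (tr n false θ₂ ρ c z)
  | true, .ex x θ, ρ, c, z => .ex c (tr n true θ (Function.update ρ x c) (c + 1) z)
  | false, .ex x θ, ρ, c, z => .all c (tr n false θ (Function.update ρ x c) (c + 1) z)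
  | true, .all x θ, ρ, c, z => .all c (tr n true θ (Function.update ρ x c) (c + 1) z)
  | false, .all x θ, ρ, c, z => .ex c (tr n false θ (Function.update ρ x c) (c + 1) z)

lemma cs_not {σ' : Type} {ar' : σ' → ℕ} (𝔅 : Struc σ' ar' A) (p : Bool) (θ : CF σ' ar')
    (s : ℕ → Option A) : CS 𝔅 p (.not θ) s ↔ CS 𝔅 (!p) θ s := by
  cases p <;> simp [CS, CSat, not_not]

lemma orc_sound (𝔄 : Struc σ ar A) (n : ℕ) (P : (Fin n → A) → Prop)
    (θ₁ θ₂ : CF (sigR σ) (arR ar n)) (p : Bool) (ρ : ℕ → ℕ) (c : ℕ)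
    (z : Fin n → ℕ) (Y : Set (ℕ → Option A))
    (hz : ∀ i, z i < c)
    (hρ₁ : ∀ v ∈ cfree θ₁, ρ v < c) (hρ₂ : ∀ v ∈ cfree θ₂, ρ v < c)
    (hsub : ∀ u ∈ Y, ∃ w, (∀ i, u (z i) = some (w i)) ∧ P w)
    (H₁ : ∀ (z' : Fin n → ℕ) (Y' : Set (ℕ → Option A)), (∀ i, z' i < c + 2 * n) →
      (∀ u ∈ Y', ∃ w, (∀ i, u (z' i) = some (w i)) ∧ P w) →
      TeamSat 𝔄 (tr n p θ₁ ρ (c + 2 * n) z') Y' →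
      ∀ s ∈ Y', CS (extStruc 𝔄 n P) p θ₁ (fun v => s (ρ v)))
    (H₂ : ∀ (z' : Fin n → ℕ) (Y' : Set (ℕ → Option A)), (∀ i, z' i < c + 2 * n) →
      (∀ u ∈ Y', ∃ w, (∀ i, u (z' i) = some (w i)) ∧ P w) →
      TeamSat 𝔄 (tr n p θ₂ ρ (c + 2 * n) z') Y' →
      ∀ s ∈ Y', CS (extStruc 𝔄 n P) p θ₂ (fun v => s (ρ v)))
    (hts : TeamSat 𝔄 (orc n c z (tr n p θ₁ ρ (c + 2 * n) (fun j => c + j))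
      (tr n p θ₂ ρ (c + 2 * n) (fun j => c + n + j))) Y) :
    ∀ s ∈ Y, CS (extStruc 𝔄 n P) p θ₁ (fun v => s (ρ v)) ∨
      CS (extStruc 𝔄 n P) p θ₂ (fun v => s (ρ v)) := by
  obtain ⟨Y', hbody, ha, hb⟩ := teamSat_exsRange_elim 𝔄 (2 * n) c _ Y hts
  obtain ⟨hi₁, hi₂, Y₁, Y₂, hun, hT₁, hT₂⟩ := hbody
  have hsub' : ∀ u ∈ Y', ∃ w, (∀ i, u (z i) = some (w i)) ∧ P w := by
    intro u hu
    obtain ⟨s, hs, hagr⟩ := ha u hu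
    obtain ⟨w, hw, hP⟩ := hsub s hs
    exact ⟨w, fun i => by rw [hagr (z i) (hz i)]; exact hw i, hP⟩
  have hY₁ : Y₁ ⊆ Y' := hun ▸ Set.subset_union_left
  have hY₂ : Y₂ ⊆ Y' := hun ▸ Set.subset_union_right
  have hsub₁ : ∀ u ∈ Y₁, ∃ w, (∀ i, u ((fun j : Fin n => c + (j : ℕ)) i) = some (w i)) ∧ P w := by
    intro u hu
    obtain ⟨t, ht, hwit⟩ := hi₁ u (hY₁ hu)
    obtain ⟨w, hw, hP⟩ := hsub' t ht
    exact ⟨w, fun i => by rw [hwit i]; exact hw i, hP⟩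
  have hsub₂ : ∀ u ∈ Y₂, ∃ w, (∀ i, u ((fun j : Fin n => c + n + (j : ℕ)) i) = some (w i)) ∧ P w := by
    intro u hu
    obtain ⟨t, ht, hwit⟩ := hi₂ u (hY₂ hu)
    obtain ⟨w, hw, hP⟩ := hsub' t ht
    exact ⟨w, fun i => by rw [hwit i]; exact hw i, hP⟩
  have hp₁ := H₁ _ Y₁ (fun i => by omega) hsub₁ hT₁
  have hp₂ := H₂ _ Y₂ (fun i => by omega) hsub₂ hT₂
  intro s hs
  obtain ⟨t, ht, hagr⟩ := hb s hs
  rw [← hun] at ht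
  rcases ht with ht | ht
  · exact Or.inl ((cs_congr (extStruc 𝔄 n P) p θ₁
      (fun v hv => hagr (ρ v) (hρ₁ v hv))).mp (hp₁ t ht))
  · exact Or.inr ((cs_congr (extStruc 𝔄 n P) p θ₂
      (fun v hv => hagr (ρ v) (hρ₂ v hv))).mp (hp₂ t ht))

lemma upd_comp_agree (s : ℕ → Option A) (ρ : ℕ → ℕ) (x c : ℕ) (a : A)
    (v : ℕ) (hv : v ≠ x → ρ v ≠ c) :
    (upd s c a) (Function.update ρ x c v) = (upd (fun u => s (ρ u)) x a) v := by
  by_cases hvx : v = x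
  · subst hvx
    rw [Function.update_self]
    simp [upd]
  · rw [Function.update_of_ne hvx]
    simp only [upd]
    rw [Function.update_of_ne (hv hvx), Function.update_of_ne hvx]

lemma sound (𝔄 : Struc σ ar A) (n : ℕ) (P : (Fin n → A) → Prop)
    (θ : CF (sigR σ) (arR ar n)) :
    ∀ (p : Bool) (ρ : ℕ → ℕ) (c : ℕ) (z : Fin n → ℕ) (Y : Set (ℕ → Option A)),
      polOK (fun R => R.isRight = true) p θ →
      (∀ v ∈ cfree θ, ρ v < c) → (∀ i, z i < c) →
      (∀ u ∈ Y, ∃ w, (∀ i, u (z i) = some (w i)) ∧ P w) →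
      TeamSat 𝔄 (tr n p θ ρ c z) Y →
      ∀ s ∈ Y, CS (extStruc 𝔄 n P) p θ (fun v => s (ρ v)) := by
  induction θ with
  | eq x y =>
      intro p ρ c z Y hpol hρ hz hsub hts s hs
      cases p
      · exact hts s hs
      · exact hts s hs
  | rel R ts =>
      intro p ρ c z Y hpol hρ hz hsub hts s hs
      rcases R with S | u
      · cases p
        · rintro ⟨t, h1, h2⟩
          exact hts s hs t h1 h2
        · exact hts s hs
      · cases p
        · exact absurd (by simp) (hpol rfl)
        · obtain ⟨t, ht, hwit⟩ := hts s hs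
          obtain ⟨w, hw, hP⟩ := hsub t ht
          exact ⟨w, fun i => (hwit i).trans (hw i), hP⟩
  | not θ ih =>
      intro p ρ c z Y hpol hρ hz hsub hts s hs
      rw [cs_not]
      cases p
      · exact ih true ρ c z Y hpol hρ hz hsub hts s hs
      · exact ih false ρ c z Y hpol hρ hz hsub hts s hs
  | and θ₁ θ₂ ih₁ ih₂ =>
      intro p ρ c z Y hpol hρ hz hsub hts s hs
      obtain ⟨hp₁, hp₂⟩ := hpol
      have hρ₁ : ∀ v ∈ cfree θ₁, ρ v < c :=
        fun v hv => hρ v (by simp only [cfree, Finset.mem_union]; exact Or.inl hv)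
      have hρ₂ : ∀ v ∈ cfree θ₂, ρ v < c :=
        fun v hv => hρ v (by simp only [cfree, Finset.mem_union]; exact Or.inr hv)
      cases p
      · have := orc_sound 𝔄 n P θ₁ θ₂ false ρ c z Y hz hρ₁ hρ₂ hsub
          (fun z' Y' hz' hsub' hts' => ih₁ false ρ (c + 2 * n) z' Y' hp₁
            (fun v hv => lt_of_lt_of_le (hρ₁ v hv) (by omega)) hz' hsub' hts')
          (fun z' Y' hz' hsub' hts' => ih₂ false ρ (c + 2 * n) z' Y' hp₂
            (fun v hv => lt_of_lt_of_le (hρ₂ v hv) (by omega)) hz' hsub' hts')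
          hts s hs
        simp only [CS, CSat] at this ⊢
        tauto
      · obtain ⟨h1, h2⟩ := hts
        exact ⟨ih₁ true ρ c z Y hp₁ hρ₁ hz hsub h1 s hs,
          ih₂ true ρ c z Y hp₂ hρ₂ hz hsub h2 s hs⟩
  | or θ₁ θ₂ ih₁ ih₂ =>
      intro p ρ c z Y hpol hρ hz hsub hts s hs
      obtain ⟨hp₁, hp₂⟩ := hpol
      have hρ₁ : ∀ v ∈ cfree θ₁, ρ v < c :=
        fun v hv => hρ v (by simp only [cfree, Finset.mem_union]; exact Or.inl hv)
      have hρ₂ : ∀ v ∈ cfree θ₂, ρ v < c :=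
        fun v hv => hρ v (by simp only [cfree, Finset.mem_union]; exact Or.inr hv)
      cases p
      · obtain ⟨h1, h2⟩ := hts
        have c1 := ih₁ false ρ c z Y hp₁ hρ₁ hz hsub h1 s hs
        have c2 := ih₂ false ρ c z Y hp₂ hρ₂ hz hsub h2 s hs
        simp only [CS, CSat] at c1 c2 ⊢
        tauto
      · have := orc_sound 𝔄 n P θ₁ θ₂ true ρ c z Y hz hρ₁ hρ₂ hsub
          (fun z' Y' hz' hsub' hts' => ih₁ true ρ (c + 2 * n) z' Y' hp₁
            (fun v hv => lt_of_lt_of_le (hρ₁ v hv) (by omega)) hz' hsub' hts')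
          (fun z' Y' hz' hsub' hts' => ih₂ true ρ (c + 2 * n) z' Y' hp₂
            (fun v hv => lt_of_lt_of_le (hρ₂ v hv) (by omega)) hz' hsub' hts')
          hts s hs
        simp only [CS, CSat] at this ⊢
        tauto
  | ex x θ ih =>
      intro p ρ c z Y hpol hρ hz hsub hts s hs
      have hρ' : ∀ v ∈ cfree θ, Function.update ρ x c v < c + 1 := by
        intro v hv
        by_cases hvx : v = x
        · subst hvx; simp
        · rw [Function.update_of_ne hvx]
          have := hρ v (by
            simp only [cfree, Finset.mem_sdiff, Finset.mem_singleton]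
            exact ⟨hv, hvx⟩)
          omega
      have hz' : ∀ i, z i < c + 1 := fun i => lt_of_lt_of_le (hz i) (by omega)
      have hagree : ∀ (t : ℕ → Option A) (a : A),
          ∀ v ∈ cfree θ, (upd t c a) (Function.update ρ x c v) =
            (upd (fun u => t (ρ u)) x a) v := by
        intro t a v hv
        refine upd_comp_agree t ρ x c a v (fun hvx => ?_)
        have := hρ v (by
            simp only [cfree, Finset.mem_sdiff, Finset.mem_singleton]
            exact ⟨hv, hvx⟩)
        omega
      cases p
      · -- negative: ∀-quantifier on the team side
        have hsub' : ∀ u ∈ {t | ∃ s ∈ Y, ∃ a : A, t = upd s c a},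
            ∃ w, (∀ i, u (z i) = some (w i)) ∧ P w := by
          rintro u ⟨s', hs', a, rfl⟩
          obtain ⟨w, hw, hP⟩ := hsub s' hs'
          refine ⟨w, fun i => ?_, hP⟩
          simp only [upd]
          rw [Function.update_of_ne (by have := hz i; omega : z i ≠ c)]
          exact hw i
        have hp := ih false (Function.update ρ x c) (c + 1) z _ hpol hρ' hz' hsub' hts
        intro hcon
        obtain ⟨a, ha⟩ := hcon
        have := hp (upd s c a) ⟨s, hs, a, rfl⟩
        exact this ((cSat_congr _ θ (hagree s a)).mpr ha)
      · obtain ⟨F, hF, hts'⟩ := hts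
        have hsub' : ∀ u ∈ {t | ∃ s ∈ Y, ∃ a ∈ F s, t = upd s c a},
            ∃ w, (∀ i, u (z i) = some (w i)) ∧ P w := by
          rintro u ⟨s', hs', a, _, rfl⟩
          obtain ⟨w, hw, hP⟩ := hsub s' hs'
          refine ⟨w, fun i => ?_, hP⟩
          simp only [upd]
          rw [Function.update_of_ne (by have := hz i; omega : z i ≠ c)]
          exact hw i
        have hp := ih true (Function.update ρ x c) (c + 1) z _ hpol hρ' hz' hsub' hts'
        obtain ⟨a, ha⟩ := hF s hs
        have := hp (upd s c a) ⟨s, hs, a, ha, rfl⟩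
        exact ⟨a, (cSat_congr _ θ (hagree s a)).mp this⟩
  | all x θ ih =>
      intro p ρ c z Y hpol hρ hz hsub hts s hs
      have hρ' : ∀ v ∈ cfree θ, Function.update ρ x c v < c + 1 := by
        intro v hv
        by_cases hvx : v = x
        · subst hvx; simp
        · rw [Function.update_of_ne hvx]
          have := hρ v (by
            simp only [cfree, Finset.mem_sdiff, Finset.mem_singleton]
            exact ⟨hv, hvx⟩)
          omega
      have hz' : ∀ i, z i < c + 1 := fun i => lt_of_lt_of_le (hz i) (by omega)
      have hagree : ∀ (t : ℕ → Option A) (a : A),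
          ∀ v ∈ cfree θ, (upd t c a) (Function.update ρ x c v) =
            (upd (fun u => t (ρ u)) x a) v := by
        intro t a v hv
        refine upd_comp_agree t ρ x c a v (fun hvx => ?_)
        have := hρ v (by
            simp only [cfree, Finset.mem_sdiff, Finset.mem_singleton]
            exact ⟨hv, hvx⟩)
        omega
      cases p
      · -- negative: ∃-quantifier on the team side
        obtain ⟨F, hF, hts'⟩ := hts
        have hsub' : ∀ u ∈ {t | ∃ s ∈ Y, ∃ a ∈ F s, t = upd s c a},
            ∃ w, (∀ i, u (z i) = some (w i)) ∧ P w := by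
          rintro u ⟨s', hs', a, _, rfl⟩
          obtain ⟨w, hw, hP⟩ := hsub s' hs'
          refine ⟨w, fun i => ?_, hP⟩
          simp only [upd]
          rw [Function.update_of_ne (by have := hz i; omega : z i ≠ c)]
          exact hw i
        have hp := ih false (Function.update ρ x c) (c + 1) z _ hpol hρ' hz' hsub' hts'
        obtain ⟨a, ha⟩ := hF s hs
        have := hp (upd s c a) ⟨s, hs, a, ha, rfl⟩
        intro hcon
        exact this ((cSat_congr _ θ (hagree s a)).mpr (hcon a))
      · have hsub' : ∀ u ∈ {t | ∃ s ∈ Y, ∃ a : A, t = upd s c a},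
            ∃ w, (∀ i, u (z i) = some (w i)) ∧ P w := by
          rintro u ⟨s', hs', a, rfl⟩
          obtain ⟨w, hw, hP⟩ := hsub s' hs'
          refine ⟨w, fun i => ?_, hP⟩
          simp only [upd]
          rw [Function.update_of_ne (by have := hz i; omega : z i ≠ c)]
          exact hw i
        have hp := ih true (Function.update ρ x c) (c + 1) z _ hpol hρ' hz' hsub' hts
        intro a
        have := hp (upd s c a) ⟨s, hs, a, rfl⟩
        exact (cSat_congr _ θ (hagree s a)).mp this

lemma orc_complete (𝔄 : Struc σ ar A) (n : ℕ) (P : (Fin n → A) → Prop)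
    (θ₁ θ₂ : CF (sigR σ) (arR ar n)) (p : Bool) (ρ : ℕ → ℕ) (c : ℕ)
    (z : Fin n → ℕ) (Y : Set (ℕ → Option A))
    (hz : ∀ i, z i < c)
    (hρ₁ : ∀ v ∈ cfree θ₁, ρ v < c) (hρ₂ : ∀ v ∈ cfree θ₂, ρ v < c)
    (hfull : Y.Nonempty → ∀ w, P w → ∃ u ∈ Y, ∀ i, u (z i) = some (w i))
    (hPne : Y.Nonempty → ∃ w, P w)
    (H₁ : ∀ (z' : Fin n → ℕ) (Y' : Set (ℕ → Option A)), (∀ i, z' i < c + 2 * n) →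
      (Y'.Nonempty → ∀ w, P w → ∃ u ∈ Y', ∀ i, u (z' i) = some (w i)) →
      (Y'.Nonempty → ∃ w, P w) →
      (∀ s ∈ Y', CS (extStruc 𝔄 n P) p θ₁ (fun v => s (ρ v))) →
      TeamSat 𝔄 (tr n p θ₁ ρ (c + 2 * n) z') Y')
    (H₂ : ∀ (z' : Fin n → ℕ) (Y' : Set (ℕ → Option A)), (∀ i, z' i < c + 2 * n) →
      (Y'.Nonempty → ∀ w, P w → ∃ u ∈ Y', ∀ i, u (z' i) = some (w i)) →
      (Y'.Nonempty → ∃ w, P w) →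
      (∀ s ∈ Y', CS (extStruc 𝔄 n P) p θ₂ (fun v => s (ρ v))) →
      TeamSat 𝔄 (tr n p θ₂ ρ (c + 2 * n) z') Y')
    (hpt : ∀ s ∈ Y, CS (extStruc 𝔄 n P) p θ₁ (fun v => s (ρ v)) ∨
      CS (extStruc 𝔄 n P) p θ₂ (fun v => s (ρ v))) :
    TeamSat 𝔄 (orc n c z (tr n p θ₁ ρ (c + 2 * n) (fun j => c + j))
      (tr n p θ₂ ρ (c + 2 * n) (fun j => c + n + j))) Y := by
  rcases Set.eq_empty_or_nonempty Y with rfl | hYne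
  · exact teamSat_empty 𝔄 _
  obtain ⟨w₀, hw₀⟩ := hPne hYne
  set G : Set (Fin (2 * n) → A) := {g | P (half1 g) ∧ P (half2 g)} with hG
  have hGne : G.Nonempty :=
    ⟨pairT w₀ w₀, by rw [Set.mem_setOf_eq, half1_pairT, half2_pairT]; exact ⟨hw₀, hw₀⟩⟩
  apply teamSat_exsRange_intro 𝔄 (2 * n) c _ Y (fun _ => G) (fun s _ => hGne)
  set Ystar : Set (ℕ → Option A) := {t | ∃ s ∈ Y, ∃ w ∈ G, t = updT c (2 * n) s w} with hYs
  -- basic facts about rows of `Ystar`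
  have hrow1 : ∀ s (g : Fin (2 * n) → A) (i : Fin n),
      updT c (2 * n) s g (c + (i : ℕ)) = some (half1 g i) := by
    intro s g i
    exact updT_at (⟨(i : ℕ), by omega⟩ : Fin (2 * n))
  have hrow2 : ∀ s (g : Fin (2 * n) → A) (i : Fin n),
      updT c (2 * n) s g (c + n + (i : ℕ)) = some (half2 g i) := by
    intro s g i
    rw [show c + n + (i : ℕ) = c + (n + (i : ℕ)) from by omega]
    exact updT_at (⟨n + (i : ℕ), by omega⟩ : Fin (2 * n))
  have hlow : ∀ s (g : Fin (2 * n) → A) (v : ℕ), v < c → updT c (2 * n) s g v = s v :=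
    fun s g v hv => updT_lt hv
  refine ⟨?_, ?_, ?_⟩
  · -- first inclusion atom
    rintro r ⟨s, hs, g, hg, rfl⟩
    obtain ⟨u, hu, huw⟩ := hfull hYne (half1 g) hg.1
    refine ⟨updT c (2 * n) u (pairT w₀ w₀), ⟨u, hu, pairT w₀ w₀,
      ⟨by rw [half1_pairT]; exact hw₀, by rw [half2_pairT]; exact hw₀⟩, rfl⟩, fun i => ?_⟩
    show updT c (2 * n) s g (c + (i : ℕ)) = updT c (2 * n) u (pairT w₀ w₀) (z i)
    rw [hrow1 s g i, hlow u _ _ (hz i), huw i]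
  · -- second inclusion atom
    rintro r ⟨s, hs, g, hg, rfl⟩
    obtain ⟨u, hu, huw⟩ := hfull hYne (half2 g) hg.2
    refine ⟨updT c (2 * n) u (pairT w₀ w₀), ⟨u, hu, pairT w₀ w₀,
      ⟨by rw [half1_pairT]; exact hw₀, by rw [half2_pairT]; exact hw₀⟩, rfl⟩, fun i => ?_⟩
    show updT c (2 * n) s g (c + n + (i : ℕ)) = updT c (2 * n) u (pairT w₀ w₀) (z i)
    rw [hrow2 s g i, hlow u _ _ (hz i), huw i]
  · -- the split disjunction
    refine ⟨{r ∈ Ystar | CS (extStruc 𝔄 n P) p θ₁ (fun v => r (ρ v))},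
      {r ∈ Ystar | CS (extStruc 𝔄 n P) p θ₂ (fun v => r (ρ v))}, ?_, ?_, ?_⟩
    · apply Set.Subset.antisymm
      · rintro r (⟨hr, _⟩ | ⟨hr, _⟩) <;> exact hr
      · rintro r hr
        obtain ⟨s, hs, g, hg, rfl⟩ := hr
        have hag : ∀ q ∈ cfree θ₁ ∪ cfree θ₂,
            s (ρ q) = updT c (2 * n) s g (ρ q) := by
          intro q hq
          rcases Finset.mem_union.mp hq with hq | hq
          · exact (hlow s g _ (hρ₁ q hq)).symm
          · exact (hlow s g _ (hρ₂ q hq)).symm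
        rcases hpt s hs with h | h
        · exact Or.inl ⟨⟨s, hs, g, hg, rfl⟩, (cs_congr _ p θ₁
            (fun q hq => hag q (Finset.mem_union_left _ hq))).mp h⟩
        · exact Or.inr ⟨⟨s, hs, g, hg, rfl⟩, (cs_congr _ p θ₂
            (fun q hq => hag q (Finset.mem_union_right _ hq))).mp h⟩
    · -- left subteam satisfies the translation of θ₁
      apply H₁
      · intro i; omega
      · rintro ⟨r₀, ⟨s₀, hs₀, g₀, hg₀, rfl⟩, hcs₀⟩ w hw
        refine ⟨updT c (2 * n) s₀ (pairT w (half2 g₀)), ⟨⟨s₀, hs₀, pairT w (half2 g₀),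
          ⟨by rw [half1_pairT]; exact hw, by rw [half2_pairT]; exact hg₀.2⟩, rfl⟩, ?_⟩, fun i => ?_⟩
        · refine (cs_congr _ p θ₁ (fun q hq => ?_)).mp hcs₀
          rw [hlow s₀ g₀ _ (hρ₁ q hq), hlow s₀ _ _ (hρ₁ q hq)]
        · show updT c (2 * n) s₀ (pairT w (half2 g₀)) (c + (i : ℕ)) = some (w i)
          rw [hrow1 s₀ _ i, half1_pairT]
      · intro _; exact ⟨w₀, hw₀⟩
      · rintro r ⟨_, hcs⟩; exact hcs
    · -- right subteam satisfies the translation of θ₂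
      apply H₂
      · intro i; omega
      · rintro ⟨r₀, ⟨s₀, hs₀, g₀, hg₀, rfl⟩, hcs₀⟩ w hw
        refine ⟨updT c (2 * n) s₀ (pairT (half1 g₀) w), ⟨⟨s₀, hs₀, pairT (half1 g₀) w,
          ⟨by rw [half1_pairT]; exact hg₀.1, by rw [half2_pairT]; exact hw⟩, rfl⟩, ?_⟩, fun i => ?_⟩
        · refine (cs_congr _ p θ₂ (fun q hq => ?_)).mp hcs₀
          rw [hlow s₀ g₀ _ (hρ₂ q hq), hlow s₀ _ _ (hρ₂ q hq)]
        · show updT c (2 * n) s₀ (pairT (half1 g₀) w) (c + n + (i : ℕ)) = some (w i)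
          rw [hrow2 s₀ _ i, half2_pairT]
      · intro _; exact ⟨w₀, hw₀⟩
      · rintro r ⟨_, hcs⟩; exact hcs

lemma complete (𝔄 : Struc σ ar A) (n : ℕ) (P : (Fin n → A) → Prop)
    (θ : CF (sigR σ) (arR ar n)) :
    ∀ (p : Bool) (ρ : ℕ → ℕ) (c : ℕ) (z : Fin n → ℕ) (Y : Set (ℕ → Option A)),
      polOK (fun R => R.isRight = true) p θ →
      (∀ v ∈ cfree θ, ρ v < c) → (∀ i, z i < c) →
      (Y.Nonempty → ∀ w, P w → ∃ u ∈ Y, ∀ i, u (z i) = some (w i)) →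
      (Y.Nonempty → ∃ w, P w) →
      (∀ s ∈ Y, CS (extStruc 𝔄 n P) p θ (fun v => s (ρ v))) →
      TeamSat 𝔄 (tr n p θ ρ c z) Y := by
  induction θ with
  | eq x y =>
      intro p ρ c z Y hpol hρ hz hfull hPne hpt
      cases p
      · exact fun s hs => hpt s hs
      · exact fun s hs => hpt s hs
  | rel R ts =>
      intro p ρ c z Y hpol hρ hz hfull hPne hpt
      rcases R with S | u
      · cases p
        · exact fun s hs t h1 h2 => hpt s hs ⟨t, h1, h2⟩
        · exact fun s hs => hpt s hs
      · cases p
        · exact absurd (by simp) (hpol rfl)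
        · intro s hs
          obtain ⟨w, hw, hP⟩ := hpt s hs
          obtain ⟨u, hu, huw⟩ := hfull ⟨s, hs⟩ w hP
          exact ⟨u, hu, fun i => (hw i).trans (huw i).symm⟩
  | not θ ih =>
      intro p ρ c z Y hpol hρ hz hfull hPne hpt
      cases p
      · exact ih true ρ c z Y hpol hρ hz hfull hPne
          (fun s hs => (cs_not _ false θ _).mp (hpt s hs))
      · exact ih false ρ c z Y hpol hρ hz hfull hPne
          (fun s hs => (cs_not _ true θ _).mp (hpt s hs))
  | and θ₁ θ₂ ih₁ ih₂ =>
      intro p ρ c z Y hpol hρ hz hfull hPne hpt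
      obtain ⟨hp₁, hp₂⟩ := hpol
      have hρ₁ : ∀ v ∈ cfree θ₁, ρ v < c :=
        fun v hv => hρ v (by simp only [cfree, Finset.mem_union]; exact Or.inl hv)
      have hρ₂ : ∀ v ∈ cfree θ₂, ρ v < c :=
        fun v hv => hρ v (by simp only [cfree, Finset.mem_union]; exact Or.inr hv)
      cases p
      · apply orc_complete 𝔄 n P θ₁ θ₂ false ρ c z Y hz hρ₁ hρ₂ hfull hPne
          (fun z' Y' hz' hfull' hPne' hpt' => ih₁ false ρ (c + 2 * n) z' Y' hp₁
            (fun v hv => lt_of_lt_of_le (hρ₁ v hv) (by omega)) hz' hfull' hPne' hpt')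
          (fun z' Y' hz' hfull' hPne' hpt' => ih₂ false ρ (c + 2 * n) z' Y' hp₂
            (fun v hv => lt_of_lt_of_le (hρ₂ v hv) (by omega)) hz' hfull' hPne' hpt')
        intro s hs
        have := hpt s hs
        simp only [CS, CSat] at this ⊢
        tauto
      · exact ⟨ih₁ true ρ c z Y hp₁ hρ₁ hz hfull hPne (fun s hs => (hpt s hs).1),
          ih₂ true ρ c z Y hp₂ hρ₂ hz hfull hPne (fun s hs => (hpt s hs).2)⟩
  | or θ₁ θ₂ ih₁ ih₂ =>
      intro p ρ c z Y hpol hρ hz hfull hPne hpt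
      obtain ⟨hp₁, hp₂⟩ := hpol
      have hρ₁ : ∀ v ∈ cfree θ₁, ρ v < c :=
        fun v hv => hρ v (by simp only [cfree, Finset.mem_union]; exact Or.inl hv)
      have hρ₂ : ∀ v ∈ cfree θ₂, ρ v < c :=
        fun v hv => hρ v (by simp only [cfree, Finset.mem_union]; exact Or.inr hv)
      cases p
      · refine ⟨ih₁ false ρ c z Y hp₁ hρ₁ hz hfull hPne ?_,
          ih₂ false ρ c z Y hp₂ hρ₂ hz hfull hPne ?_⟩ <;>
          (intro s hs; have := hpt s hs; simp only [CS, CSat] at this ⊢; tauto)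
      · apply orc_complete 𝔄 n P θ₁ θ₂ true ρ c z Y hz hρ₁ hρ₂ hfull hPne
          (fun z' Y' hz' hfull' hPne' hpt' => ih₁ true ρ (c + 2 * n) z' Y' hp₁
            (fun v hv => lt_of_lt_of_le (hρ₁ v hv) (by omega)) hz' hfull' hPne' hpt')
          (fun z' Y' hz' hfull' hPne' hpt' => ih₂ true ρ (c + 2 * n) z' Y' hp₂
            (fun v hv => lt_of_lt_of_le (hρ₂ v hv) (by omega)) hz' hfull' hPne' hpt')
        intro s hs
        have := hpt s hs
        simp only [CS, CSat] at this ⊢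
        tauto
  | ex x θ ih =>
      intro p ρ c z Y hpol hρ hz hfull hPne hpt
      have hρ' : ∀ v ∈ cfree θ, Function.update ρ x c v < c + 1 := by
        intro v hv
        by_cases hvx : v = x
        · subst hvx; simp
        · rw [Function.update_of_ne hvx]
          have := hρ v (by
            simp only [cfree, Finset.mem_sdiff, Finset.mem_singleton]
            exact ⟨hv, hvx⟩)
          omega
      have hz' : ∀ i, z i < c + 1 := fun i => lt_of_lt_of_le (hz i) (by omega)
      have hagree : ∀ (t : ℕ → Option A) (a : A),
          ∀ v ∈ cfree θ, (upd t c a) (Function.update ρ x c v) =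
            (upd (fun u => t (ρ u)) x a) v := by
        intro t a v hv
        refine upd_comp_agree t ρ x c a v (fun hvx => ?_)
        have := hρ v (by
          simp only [cfree, Finset.mem_sdiff, Finset.mem_singleton]
          exact ⟨hv, hvx⟩)
        omega
      have hzc : ∀ (t : ℕ → Option A) (a : A) (i : Fin n), upd t c a (z i) = t (z i) := by
        intro t a i
        simp only [upd]
        rw [Function.update_of_ne (by have := hz i; omega : z i ≠ c)]
      cases p
      · -- negative: universal on the team side
        show TeamSat 𝔄 (tr n false θ (Function.update ρ x c) (c + 1) z)
          {t | ∃ s ∈ Y, ∃ a : A, t = upd s c a}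
        apply ih false (Function.update ρ x c) (c + 1) z _ hpol hρ' hz'
        · rintro ⟨t₀, s₀, hs₀, a₀, rfl⟩ w hw
          obtain ⟨u, hu, huw⟩ := hfull ⟨s₀, hs₀⟩ w hw
          exact ⟨upd u c a₀, ⟨u, hu, a₀, rfl⟩, fun i => (hzc u a₀ i).trans (huw i)⟩
        · rintro ⟨t₀, s₀, hs₀, a₀, rfl⟩
          exact hPne ⟨s₀, hs₀⟩
        · rintro t ⟨s, hs, a, rfl⟩
          intro hcon
          exact hpt s hs ⟨a, (cSat_congr _ θ (hagree s a)).mp hcon⟩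
      · refine ⟨fun s => {a | CSat (extStruc 𝔄 n P) θ (upd (fun v => s (ρ v)) x a)}, ?_, ?_⟩
        · intro s hs
          obtain ⟨a, ha⟩ := hpt s hs
          exact ⟨a, ha⟩
        · apply ih true (Function.update ρ x c) (c + 1) z _ hpol hρ' hz'
          · rintro ⟨t₀, s₀, hs₀, a₀, ha₀, rfl⟩ w hw
            obtain ⟨u, hu, huw⟩ := hfull ⟨s₀, hs₀⟩ w hw
            obtain ⟨b, hb⟩ := hpt u hu
            exact ⟨upd u c b, ⟨u, hu, b, hb, rfl⟩, fun i => (hzc u b i).trans (huw i)⟩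
          · rintro ⟨t₀, s₀, hs₀, _⟩
            exact hPne ⟨s₀, hs₀⟩
          · rintro t ⟨s, hs, a, ha, rfl⟩
            exact (cSat_congr _ θ (hagree s a)).mpr ha
  | all x θ ih =>
      intro p ρ c z Y hpol hρ hz hfull hPne hpt
      have hρ' : ∀ v ∈ cfree θ, Function.update ρ x c v < c + 1 := by
        intro v hv
        by_cases hvx : v = x
        · subst hvx; simp
        · rw [Function.update_of_ne hvx]
          have := hρ v (by
            simp only [cfree, Finset.mem_sdiff, Finset.mem_singleton]
            exact ⟨hv, hvx⟩)
          omega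
      have hz' : ∀ i, z i < c + 1 := fun i => lt_of_lt_of_le (hz i) (by omega)
      have hagree : ∀ (t : ℕ → Option A) (a : A),
          ∀ v ∈ cfree θ, (upd t c a) (Function.update ρ x c v) =
            (upd (fun u => t (ρ u)) x a) v := by
        intro t a v hv
        refine upd_comp_agree t ρ x c a v (fun hvx => ?_)
        have := hρ v (by
          simp only [cfree, Finset.mem_sdiff, Finset.mem_singleton]
          exact ⟨hv, hvx⟩)
        omega
      have hzc : ∀ (t : ℕ → Option A) (a : A) (i : Fin n), upd t c a (z i) = t (z i) := by
        intro t a i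
        simp only [upd]
        rw [Function.update_of_ne (by have := hz i; omega : z i ≠ c)]
      cases p
      · -- negative: existential on the team side
        refine ⟨fun s => {a | ¬ CSat (extStruc 𝔄 n P) θ (upd (fun v => s (ρ v)) x a)}, ?_, ?_⟩
        · intro s hs
          exact not_forall.mp (hpt s hs)
        · apply ih false (Function.update ρ x c) (c + 1) z _ hpol hρ' hz'
          · rintro ⟨t₀, s₀, hs₀, a₀, ha₀, rfl⟩ w hw
            obtain ⟨u, hu, huw⟩ := hfull ⟨s₀, hs₀⟩ w hw
            obtain ⟨b, hb⟩ := not_forall.mp (hpt u hu)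
            exact ⟨upd u c b, ⟨u, hu, b, hb, rfl⟩, fun i => (hzc u b i).trans (huw i)⟩
          · rintro ⟨t₀, s₀, hs₀, _⟩
            exact hPne ⟨s₀, hs₀⟩
          · rintro t ⟨s, hs, a, ha, rfl⟩
            exact fun hcon => ha ((cSat_congr _ θ (hagree s a)).mp hcon)
      · show TeamSat 𝔄 (tr n true θ (Function.update ρ x c) (c + 1) z)
          {t | ∃ s ∈ Y, ∃ a : A, t = upd s c a}
        apply ih true (Function.update ρ x c) (c + 1) z _ hpol hρ' hz'
        · rintro ⟨t₀, s₀, hs₀, a₀, rfl⟩ w hw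
          obtain ⟨u, hu, huw⟩ := hfull ⟨s₀, hs₀⟩ w hw
          exact ⟨upd u c a₀, ⟨u, hu, a₀, rfl⟩, fun i => (hzc u a₀ i).trans (huw i)⟩
        · rintro ⟨t₀, s₀, hs₀, _⟩
          exact hPne ⟨s₀, hs₀⟩
        · rintro t ⟨s, hs, a, rfl⟩
          exact (cSat_congr _ θ (hagree s a)).mpr (hpt s hs a)

lemma mem_tfree_exsRange (φ : TF σ ar) :
    ∀ (k c v : ℕ), v ∈ tfree (exsRange k c φ) ↔ v ∈ tfree φ ∧ ¬(c ≤ v ∧ v < c + k) := by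
  intro k
  induction k with
  | zero => intro c v; simp [exsRange]
  | succ k ih =>
      intro c v
      show v ∈ tfree (exsRange k (c+1) φ) \ {c} ↔ _
      rw [Finset.mem_sdiff, ih (c+1) v, Finset.mem_singleton]
      constructor
      · rintro ⟨⟨h1, h2⟩, h3⟩
        exact ⟨h1, by omega⟩
      · rintro ⟨h1, h2⟩
        exact ⟨⟨h1, by omega⟩, by omega⟩

lemma tfree_orc (n c : ℕ) (z : Fin n → ℕ) (T₁ T₂ : TF σ ar) {v : ℕ}
    (hv : v ∈ tfree (orc n c z T₁ T₂)) :
    (v ∈ tfree T₁ ∪ tfree T₂ ∨ ∃ i, z i = v) ∧ ¬(c ≤ v ∧ v < c + 2 * n) := by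
  rw [orc, mem_tfree_exsRange] at hv
  obtain ⟨h1, h2⟩ := hv
  refine ⟨?_, h2⟩
  simp only [tfree, Finset.mem_union, Finset.mem_image, Finset.mem_univ, true_and] at h1
  rcases h1 with ((⟨i, hi⟩ | ⟨i, hi⟩) | ((⟨i, hi⟩ | ⟨i, hi⟩) | (h | h)))
  · exfalso; apply h2
    have hi' : c + (i : ℕ) = v := hi
    have := i.isLt; omega
  · exact Or.inr ⟨i, hi⟩
  · exfalso; apply h2
    have hi' : c + n + (i : ℕ) = v := hi
    have := i.isLt; omega
  · exact Or.inr ⟨i, hi⟩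
  · exact Or.inl (Finset.mem_union.mpr (Or.inl h))
  · exact Or.inl (Finset.mem_union.mpr (Or.inr h))

lemma tfree_tr (n : ℕ) (θ : CF (sigR σ) (arR ar n)) :
    ∀ (p : Bool) (ρ : ℕ → ℕ) (c : ℕ) (z : Fin n → ℕ),
      polOK (fun R => R.isRight = true) p θ →
      (∀ v ∈ cfree θ, ρ v < c) → (∀ i, z i < c) →
      tfree (tr n p θ ρ c z) ⊆ (cfree θ).image ρ ∪ Finset.image z Finset.univ := by
  induction θ with
  | eq x y =>
      intro p ρ c z hpol hρ hz
      cases p <;>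
      · intro v hv
        simp only [tr, tfree, Finset.mem_insert, Finset.mem_singleton] at hv
        apply Finset.mem_union_left
        rcases hv with rfl | rfl
        · exact Finset.mem_image_of_mem ρ (by simp [cfree])
        · exact Finset.mem_image_of_mem ρ (by simp [cfree])
  | rel R ts =>
      intro p ρ c z hpol hρ hz
      rcases R with S | u
      · cases p <;>
        · intro v hv
          simp only [tr, tfree, Finset.mem_image, Finset.mem_univ, true_and] at hv
          obtain ⟨i, rfl⟩ := hv
          apply Finset.mem_union_left
          exact Finset.mem_image_of_mem ρ (by simp only [cfree]; exact Finset.mem_image_of_mem ts (Finset.mem_univ i))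
      · cases p
        · exact absurd (by simp) (hpol rfl)
        · intro v hv
          simp only [tr, tfree, Finset.mem_union, Finset.mem_image, Finset.mem_univ, true_and] at hv
          rcases hv with ⟨i, rfl⟩ | ⟨i, rfl⟩
          · apply Finset.mem_union_left
            exact Finset.mem_image_of_mem ρ (by simp only [cfree]; exact Finset.mem_image_of_mem ts (Finset.mem_univ i))
          · apply Finset.mem_union_right
            exact Finset.mem_image_of_mem z (Finset.mem_univ i)
  | not θ ih =>
      intro p ρ c z hpol hρ hz
      cases p
      · exact ih true ρ c z hpol hρ hz
      · exact ih false ρ c z hpol hρ hz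
  | and θ₁ θ₂ ih₁ ih₂ =>
      intro p ρ c z hpol hρ hz
      obtain ⟨hp₁, hp₂⟩ := hpol
      have hρ₁ : ∀ v ∈ cfree θ₁, ρ v < c :=
        fun v hv => hρ v (by simp only [cfree, Finset.mem_union]; exact Or.inl hv)
      have hρ₂ : ∀ v ∈ cfree θ₂, ρ v < c :=
        fun v hv => hρ v (by simp only [cfree, Finset.mem_union]; exact Or.inr hv)
      have hsub : (cfree θ₁).image ρ ∪ (cfree θ₂).image ρ ⊆ (cfree (CF.and θ₁ θ₂)).image ρ := by
        intro v hv
        rcases Finset.mem_union.mp hv with h | h <;>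
          (obtain ⟨u, hu, rfl⟩ := Finset.mem_image.mp h
           exact Finset.mem_image_of_mem ρ (by
            simp only [cfree, Finset.mem_union]
            first | exact Or.inl hu | exact Or.inr hu))
      cases p
      · intro v hv
        obtain ⟨h1, h2⟩ := tfree_orc n c z _ _ hv
        rcases h1 with h | ⟨i, rfl⟩
        · rcases Finset.mem_union.mp h with h | h
          · have := ih₁ false ρ (c + 2 * n) (fun j => c + (j : ℕ)) hp₁
              (fun v hv => lt_of_lt_of_le (hρ₁ v hv) (by omega))
              (fun i => by have := i.isLt; show c + (i : ℕ) < c + 2 * n; omega) h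
            rcases Finset.mem_union.mp this with h' | h'
            · exact Finset.mem_union_left _ (hsub (Finset.mem_union_left _ h'))
            · obtain ⟨i, _, hi⟩ := Finset.mem_image.mp h'
              exfalso; apply h2
              have := i.isLt
              omega
          · have := ih₂ false ρ (c + 2 * n) (fun j => c + n + (j : ℕ)) hp₂
              (fun v hv => lt_of_lt_of_le (hρ₂ v hv) (by omega))
              (fun i => by have := i.isLt; show c + n + (i : ℕ) < c + 2 * n; omega) h
            rcases Finset.mem_union.mp this with h' | h'
            · exact Finset.mem_union_left _ (hsub (Finset.mem_union_right _ h'))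
            · obtain ⟨i, _, hi⟩ := Finset.mem_image.mp h'
              exfalso; apply h2
              have := i.isLt
              omega
        · exact Finset.mem_union_right _ (Finset.mem_image_of_mem z (Finset.mem_univ i))
      · intro v hv
        simp only [tr, tfree, Finset.mem_union] at hv
        rcases hv with h | h
        · rcases Finset.mem_union.mp (ih₁ true ρ c z hp₁ hρ₁ hz h) with h' | h'
          · exact Finset.mem_union_left _ (hsub (Finset.mem_union_left _ h'))
          · exact Finset.mem_union_right _ h'
        · rcases Finset.mem_union.mp (ih₂ true ρ c z hp₂ hρ₂ hz h) with h' | h'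
          · exact Finset.mem_union_left _ (hsub (Finset.mem_union_right _ h'))
          · exact Finset.mem_union_right _ h'
  | or θ₁ θ₂ ih₁ ih₂ =>
      intro p ρ c z hpol hρ hz
      obtain ⟨hp₁, hp₂⟩ := hpol
      have hρ₁ : ∀ v ∈ cfree θ₁, ρ v < c :=
        fun v hv => hρ v (by simp only [cfree, Finset.mem_union]; exact Or.inl hv)
      have hρ₂ : ∀ v ∈ cfree θ₂, ρ v < c :=
        fun v hv => hρ v (by simp only [cfree, Finset.mem_union]; exact Or.inr hv)
      have hsub : (cfree θ₁).image ρ ∪ (cfree θ₂).image ρ ⊆ (cfree (CF.or θ₁ θ₂)).image ρ := by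
        intro v hv
        rcases Finset.mem_union.mp hv with h | h <;>
          (obtain ⟨u, hu, rfl⟩ := Finset.mem_image.mp h
           exact Finset.mem_image_of_mem ρ (by
            simp only [cfree, Finset.mem_union]
            first | exact Or.inl hu | exact Or.inr hu))
      cases p
      · intro v hv
        simp only [tr, tfree, Finset.mem_union] at hv
        rcases hv with h | h
        · rcases Finset.mem_union.mp (ih₁ false ρ c z hp₁ hρ₁ hz h) with h' | h'
          · exact Finset.mem_union_left _ (hsub (Finset.mem_union_left _ h'))
          · exact Finset.mem_union_right _ h'
        · rcases Finset.mem_union.mp (ih₂ false ρ c z hp₂ hρ₂ hz h) with h' | h'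
          · exact Finset.mem_union_left _ (hsub (Finset.mem_union_right _ h'))
          · exact Finset.mem_union_right _ h'
      · intro v hv
        obtain ⟨h1, h2⟩ := tfree_orc n c z _ _ hv
        rcases h1 with h | ⟨i, rfl⟩
        · rcases Finset.mem_union.mp h with h | h
          · have := ih₁ true ρ (c + 2 * n) (fun j => c + (j : ℕ)) hp₁
              (fun v hv => lt_of_lt_of_le (hρ₁ v hv) (by omega))
              (fun i => by have := i.isLt; show c + (i : ℕ) < c + 2 * n; omega) h
            rcases Finset.mem_union.mp this with h' | h'
            · exact Finset.mem_union_left _ (hsub (Finset.mem_union_left _ h'))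
            · obtain ⟨i, _, hi⟩ := Finset.mem_image.mp h'
              exfalso; apply h2
              have := i.isLt
              omega
          · have := ih₂ true ρ (c + 2 * n) (fun j => c + n + (j : ℕ)) hp₂
              (fun v hv => lt_of_lt_of_le (hρ₂ v hv) (by omega))
              (fun i => by have := i.isLt; show c + n + (i : ℕ) < c + 2 * n; omega) h
            rcases Finset.mem_union.mp this with h' | h'
            · exact Finset.mem_union_left _ (hsub (Finset.mem_union_right _ h'))
            · obtain ⟨i, _, hi⟩ := Finset.mem_image.mp h'
              exfalso; apply h2
              have := i.isLt
              omega
        · exact Finset.mem_union_right _ (Finset.mem_image_of_mem z (Finset.mem_univ i))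
  | ex x θ ih =>
      intro p ρ c z hpol hρ hz
      have hρ' : ∀ v ∈ cfree θ, Function.update ρ x c v < c + 1 := by
        intro v hv
        by_cases hvx : v = x
        · subst hvx; simp
        · rw [Function.update_of_ne hvx]
          have := hρ v (by
            simp only [cfree, Finset.mem_sdiff, Finset.mem_singleton]
            exact ⟨hv, hvx⟩)
          omega
      have hz' : ∀ i, z i < c + 1 := fun i => lt_of_lt_of_le (hz i) (by omega)
      have key : ∀ v ∈ tfree (tr n p θ (Function.update ρ x c) (c + 1) z) \ {c},
          v ∈ (cfree (CF.ex x θ)).image ρ ∪ Finset.image z Finset.univ := by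
        intro v hv
        obtain ⟨hv1, hv2⟩ := Finset.mem_sdiff.mp hv
        rw [Finset.mem_singleton] at hv2
        have := ih p (Function.update ρ x c) (c + 1) z hpol hρ' hz' hv1
        rcases Finset.mem_union.mp this with h | h
        · obtain ⟨u, hu, rfl⟩ := Finset.mem_image.mp h
          by_cases hux : u = x
          · subst hux
            exact absurd (Function.update_self u c ρ) hv2
          · rw [Function.update_of_ne hux]
            apply Finset.mem_union_left
            exact Finset.mem_image_of_mem ρ (by
              simp only [cfree, Finset.mem_sdiff, Finset.mem_singleton]
              exact ⟨hu, hux⟩)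
        · exact Finset.mem_union_right _ h
      cases p
      · exact key
      · exact key
  | all x θ ih =>
      intro p ρ c z hpol hρ hz
      have hρ' : ∀ v ∈ cfree θ, Function.update ρ x c v < c + 1 := by
        intro v hv
        by_cases hvx : v = x
        · subst hvx; simp
        · rw [Function.update_of_ne hvx]
          have := hρ v (by
            simp only [cfree, Finset.mem_sdiff, Finset.mem_singleton]
            exact ⟨hv, hvx⟩)
          omega
      have hz' : ∀ i, z i < c + 1 := fun i => lt_of_lt_of_le (hz i) (by omega)
      have key : ∀ v ∈ tfree (tr n p θ (Function.update ρ x c) (c + 1) z) \ {c},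
          v ∈ (cfree (CF.all x θ)).image ρ ∪ Finset.image z Finset.univ := by
        intro v hv
        obtain ⟨hv1, hv2⟩ := Finset.mem_sdiff.mp hv
        rw [Finset.mem_singleton] at hv2
        have := ih p (Function.update ρ x c) (c + 1) z hpol hρ' hz' hv1
        rcases Finset.mem_union.mp this with h | h
        · obtain ⟨u, hu, rfl⟩ := Finset.mem_image.mp h
          by_cases hux : u = x
          · subst hux
            exact absurd (Function.update_self u c ρ) hv2
          · rw [Function.update_of_ne hux]
            apply Finset.mem_union_left
            exact Finset.mem_image_of_mem ρ (by
              simp only [cfree, Finset.mem_sdiff, Finset.mem_singleton]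
              exact ⟨hu, hux⟩)
        · exact Finset.mem_union_right _ h
      cases p
      · exact key
      · exact key

lemma cSat_foralls {σ' : Type} {ar' : σ' → ℕ} (𝔅 : Struc σ' ar' A) (φ : CF σ' ar') :
    ∀ (l : List ℕ) (s : ℕ → Option A),
      CSat 𝔅 (foralls l φ) s ↔
        ∀ t : ℕ → Option A, (∀ v, v ∉ l → t v = s v) →
          (∀ v ∈ l, (t v).isSome = true) → CSat 𝔅 φ t := by
  intro l
  induction l with
  | nil =>
      intro s
      constructor
      · intro h t hag _
        have : t = s := funext fun v => hag v (by simp)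
        rw [this]
        exact h
      · intro h
        exact h s (fun _ _ => rfl) (by simp)
  | cons x l ih =>
      intro s
      show (∀ a, CSat 𝔅 (foralls l φ) (upd s x a)) ↔ _
      constructor
      · intro h t hag hsome
        have hx : (t x).isSome = true := hsome x (by simp)
        obtain ⟨a, ha⟩ := Option.isSome_iff_exists.mp hx
        refine (ih (upd s x a)).mp (h a) t (fun v hv => ?_) (fun v hv => hsome v (by simp [hv]))
        by_cases hvx : v = x
        · subst hvx
          simp [upd, ha]
        · rw [show upd s x a v = s v from by simp [upd, Function.update_of_ne hvx]]
          exact hag v (by simp [hv, hvx])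
      · intro h a
        refine (ih (upd s x a)).mpr (fun t hag hsome => h t (fun v hv => ?_) (fun v hv => ?_))
        · simp only [List.mem_cons, not_or] at hv
          rw [hag v hv.2, show upd s x a v = s v from by simp [upd, Function.update_of_ne hv.1]]
        · rcases List.mem_cons.mp hv with rfl | hv'
          · by_cases hxl : v ∈ l
            · exact hsome v hxl
            · rw [hag v hxl]
              simp [upd]
          · exact hsome v hv'

/-- myopic formulas are expressible in inclusion logic.
Let `φ(R) = ∀x̄ (R(x̄) → ψ(R,x̄))` be myopic, i.e. the first-order
`σ∪{R}`-formula `ψ` (with free variables among `x̄`) contains `R` only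
positively. Then there is an FO(⊆) formula `χ` with free variables among `x̄`
such that for every `σ`-structure `𝔄` and every team `X` with domain `x̄`,
`𝔄 ⊨_X χ` iff `(𝔄, rel(X)) ⊨ φ(R)`. -/
theorem myopic_expressible_in_inclusion_logic (σ : Type) (ar : σ → ℕ)
    (n : ℕ) (xs : Fin n → ℕ) (hinj : Function.Injective xs)
    (ψ : CF (σ ⊕ Unit) (Sum.elim ar fun _ => n))
    (hpos : polOK (fun R => R.isRight = true) true ψ)
    (hfv : cfree ψ ⊆ Finset.image xs Finset.univ) :
    ∃ χ : TF σ ar, tfree χ ⊆ Finset.image xs Finset.univ ∧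
      ∀ (A : Type) (𝔄 : Struc σ ar A) (X : Set (ℕ → Option A)),
        (∀ s ∈ X, (∀ i : Fin n, (s (xs i)).isSome = true) ∧
          (∀ y : ℕ, y ∉ Finset.image xs Finset.univ → s y = none)) →
        (TeamSat 𝔄 χ X ↔
          CSat (extStruc 𝔄 n (relOf n xs X)) (myopic n xs ψ)
            (fun _ => (none : Option A))) := by
  classical
  set c₀ : ℕ := (Finset.image xs Finset.univ).sup id + 1 with hc₀
  have hxs_lt : ∀ i, xs i < c₀ := fun i =>
    Nat.lt_succ_of_le (Finset.le_sup (f := id) (Finset.mem_image_of_mem xs (Finset.mem_univ i)))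
  have hρ : ∀ v ∈ cfree ψ, (id : ℕ → ℕ) v < c₀ := by
    intro v hv
    obtain ⟨i, _, rfl⟩ := Finset.mem_image.mp (hfv hv)
    exact hxs_lt i
  have hmem : ∀ v, v ∈ List.ofFn xs ↔ v ∈ Finset.image xs Finset.univ := by
    intro v
    rw [List.mem_ofFn]
    simp [Set.mem_range, eq_comm]
  refine ⟨tr n true ψ id c₀ xs, ?_, ?_⟩
  · intro v hv
    rcases Finset.mem_union.mp (tfree_tr n ψ true id c₀ xs hpos hρ hxs_lt hv) with h | h
    · rw [Finset.image_id] at h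
      exact hfv h
    · exact h
  · intro A 𝔄 X hX
    constructor
    · -- soundness
      intro hts
      have hsub : ∀ u ∈ X, ∃ w, (∀ i, u (xs i) = some (w i)) ∧ relOf n xs X w := by
        intro u hu
        obtain ⟨h1, _⟩ := hX u hu
        exact ⟨fun i => (u (xs i)).get (h1 i), fun i => (Option.some_get (h1 i)).symm,
          ⟨u, hu, fun i => (Option.some_get (h1 i)).symm⟩⟩
      have hpt := sound 𝔄 n (relOf n xs X) ψ true id c₀ xs X hpos hρ hxs_lt hsub hts
      show CSat _ (foralls (List.ofFn xs) (CF.or (CF.not (CF.rel (Sum.inr ()) xs)) ψ)) _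
      rw [cSat_foralls]
      intro t hnone hsome
      show ¬ CSat (extStruc 𝔄 n (relOf n xs X)) (CF.rel (Sum.inr ()) xs) t ∨
        CSat (extStruc 𝔄 n (relOf n xs X)) ψ t
      by_cases hrel : CSat (extStruc 𝔄 n (relOf n xs X)) (CF.rel (Sum.inr ()) xs) t
      · obtain ⟨w, hw, hPw⟩ := hrel
        obtain ⟨s, hsX, hsw⟩ := (hPw : relOf n xs X w)
        have hteq : t = s := by
          funext v
          by_cases hv : v ∈ Finset.image xs Finset.univ
          · obtain ⟨i, _, rfl⟩ := Finset.mem_image.mp hv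
            rw [hw i, hsw i]
          · rw [hnone v (fun hc => hv ((hmem v).mp hc)), (hX s hsX).2 v hv]
        refine Or.inr ?_
        rw [hteq]
        exact hpt s hsX
      · exact Or.inl hrel
    · -- completeness
      intro hcl
      apply complete 𝔄 n (relOf n xs X) ψ true id c₀ xs X hpos hρ hxs_lt
      · intro _ w hw
        exact hw
      · rintro ⟨s, hs⟩
        obtain ⟨h1, _⟩ := hX s hs
        exact ⟨fun i => (s (xs i)).get (h1 i), s, hs, fun i => (Option.some_get (h1 i)).symm⟩
      · intro s hs
        obtain ⟨h1, h2⟩ := hX s hs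
        have hmain := (cSat_foralls (extStruc 𝔄 n (relOf n xs X))
            (CF.or (CF.not (CF.rel (Sum.inr ()) xs)) ψ) (List.ofFn xs) (fun _ => none)).mp hcl s
          (fun v hv => h2 v (fun hc => hv ((hmem v).mpr hc)))
          (fun v hv => by
            obtain ⟨i, _, rfl⟩ := Finset.mem_image.mp ((hmem v).mp hv)
            exact h1 i)
        rcases (show ¬ CSat (extStruc 𝔄 n (relOf n xs X)) (CF.rel (Sum.inr ()) xs) s ∨
            CSat (extStruc 𝔄 n (relOf n xs X)) ψ s from hmain) with hneg | hpsi
        · exact absurd ⟨fun i => (s (xs i)).get (h1 i),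
            fun i => (Option.some_get (h1 i)).symm,
            ⟨s, hs, fun i => (Option.some_get (h1 i)).symm⟩⟩ hneg
        · exact hpsi
end Stmt15
end
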